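/- Let φ be a set of UTVPI constraints whose constraint graph G_φ contains no negative weight cycle (i.e., φ is satisfiable in ℚ), and define ρ(u) = ⌊wSP(u,−u)/2⌋. Then φ is unsatisfiable in ℤ if and only if there exists a vertex v of G_φ with ρ(v) + ρ(−v) < 0. -/

import Mathlib

namespace UTVPIPaper

/-- A linear integer constraint `f ≤ bound`, where `f` is a finitely supported
integer linear form over the variables `X`. -/
structure UC (X : Type*) where
  f : X →₀ ℤ
  bound : ℤ

variable {X : Type*}

/-- `c` is a UTVPI constraint, i.e. of the form `a·x + b·y ≤ d` with `a, b ∈ {-1, 0, 1}`. -/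
def UC.IsUTVPI (c : UC X) : Prop :=
  ∃ (a b : ℤ) (x y : X), (a = -1 ∨ a = 0 ∨ a = 1) ∧ (b = -1 ∨ b = 0 ∨ b = 1) ∧
    c.f = Finsupp.single x a + Finsupp.single y b

/-- The constraint `c` holds under the integer assignment `v`. -/
def UC.holds (v : X → ℤ) (c : UC X) : Prop :=
  (c.f.sum fun x a => a * v x) ≤ c.bound

/-- The assignment `v` satisfies all constraints of `φ`. -/
def Sat (v : X → ℤ) (φ : Set (UC X)) : Prop := ∀ c ∈ φ, c.holds v

/-- `φ` is satisfiable in ℤ. -/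
def SatZ (φ : Set (UC X)) : Prop := ∃ v : X → ℤ, Sat v φ

/-- The constraint `c` holds under the rational assignment `v`. -/
def UC.holdsQ (v : X → ℚ) (c : UC X) : Prop :=
  (c.f.sum fun x a => (a : ℚ) * v x) ≤ (c.bound : ℚ)

/-- `φ` is satisfiable in ℚ. -/
def SatQ (φ : Set (UC X)) : Prop := ∃ v : X → ℚ, ∀ c ∈ φ, c.holdsQ v

/-- The transitive closure `TC(φ)`: the smallest set containing `φ` closed under
the rule: `a·x - c·y ≤ d₁` and `c·y + b·z ≤ d₂` imply `a·x + b·z ≤ d₁ + d₂`,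
for `a, b ∈ {-1,0,1}` and `c ∈ {-1,1}`. -/
inductive TC (φ : Set (UC X)) : UC X → Prop
  | base {c : UC X} : c ∈ φ → TC φ c
  | trans {a b c : ℤ} {x y z : X} {d₁ d₂ : ℤ} :
      (a = -1 ∨ a = 0 ∨ a = 1) → (b = -1 ∨ b = 0 ∨ b = 1) → (c = -1 ∨ c = 1) →
      TC φ ⟨Finsupp.single x a - Finsupp.single y c, d₁⟩ →
      TC φ ⟨Finsupp.single y c + Finsupp.single z b, d₂⟩ →
      TC φ ⟨Finsupp.single x a + Finsupp.single z b, d₁ + d₂⟩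

/-- The tightened closure `TI(φ)`: the smallest set containing `φ` closed under
the rule: `a·x + a·x ≤ d` implies `a·x ≤ ⌊d/2⌋`, for `a ∈ {-1,1}`. -/
inductive TI (φ : Set (UC X)) : UC X → Prop
  | base {c : UC X} : c ∈ φ → TI φ c
  | tighten {a : ℤ} {x : X} {d : ℤ} :
      (a = -1 ∨ a = 1) →
      TI φ ⟨Finsupp.single x a + Finsupp.single x a, d⟩ →
      TI φ ⟨Finsupp.single x a, Int.fdiv d 2⟩

/-- The tightened transitive closure `TTC(φ)`: the smallest set containing `φ`
closed under both the transitivity and the tightening rules. -/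
inductive TTC (φ : Set (UC X)) : UC X → Prop
  | base {c : UC X} : c ∈ φ → TTC φ c
  | trans {a b c : ℤ} {x y z : X} {d₁ d₂ : ℤ} :
      (a = -1 ∨ a = 0 ∨ a = 1) → (b = -1 ∨ b = 0 ∨ b = 1) → (c = -1 ∨ c = 1) →
      TTC φ ⟨Finsupp.single x a - Finsupp.single y c, d₁⟩ →
      TTC φ ⟨Finsupp.single y c + Finsupp.single z b, d₂⟩ →
      TTC φ ⟨Finsupp.single x a + Finsupp.single z b, d₁ + d₂⟩
  | tighten {a : ℤ} {x : X} {d : ℤ} :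
      (a = -1 ∨ a = 1) →
      TTC φ ⟨Finsupp.single x a + Finsupp.single x a, d⟩ →
      TTC φ ⟨Finsupp.single x a, Int.fdiv d 2⟩

/-- Vertices of the constraint graph: `(true, x)` is `x⁺` and `(false, x)` is `x⁻`. -/
abbrev Vtx (X : Type*) := Bool × X

/-- The counterpart `-u` of a vertex `u`. -/
def vneg (u : Vtx X) : Vtx X := (!u.1, u.2)

/-- The set of edges `E(c)` associated with a UTVPI constraint `c`
(the transformation table):
`x - y ≤ d` gives `(y⁺, x⁺, d)` and `(x⁻, y⁻, d)`;
`x + y ≤ d` gives `(y⁻, x⁺, d)` and `(x⁻, y⁺, d)`;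
`-x - y ≤ d` gives `(y⁺, x⁻, d)` and `(x⁺, y⁻, d)`;
`x ≤ d` gives `(x⁻, x⁺, 2d)`; `-x ≤ d` gives `(x⁺, x⁻, 2d)`. -/
def cedges (c : UC X) : Set (Vtx X × Vtx X × ℤ) :=
  { e | ∃ (x y : X) (d : ℤ),
      (c = ⟨Finsupp.single x 1 - Finsupp.single y 1, d⟩ ∧
        (e = ((true, y), (true, x), d) ∨ e = ((false, x), (false, y), d))) ∨
      (c = ⟨Finsupp.single x 1 + Finsupp.single y 1, d⟩ ∧
        (e = ((false, y), (true, x), d) ∨ e = ((false, x), (true, y), d))) ∨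
      (c = ⟨-Finsupp.single x 1 - Finsupp.single y 1, d⟩ ∧
        (e = ((true, y), (false, x), d) ∨ e = ((true, x), (false, y), d))) ∨
      (c = ⟨Finsupp.single x 1, d⟩ ∧ e = ((false, x), (true, x), 2 * d)) ∨
      (c = ⟨-Finsupp.single x 1, d⟩ ∧ e = ((true, x), (false, x), 2 * d)) }

/-- The constraint graph `G_φ` of a set `φ` of UTVPI constraints. -/
def Gr (φ : Set (UC X)) : Set (Vtx X × Vtx X × ℤ) := { e | ∃ c ∈ φ, e ∈ cedges c }

/-- `IsPath E u p v`: `p` is a path (a sequence of consecutive weighted edges,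
each belonging to the edge set `E`) from vertex `u` to vertex `v`. -/
inductive IsPath {V : Type*} (E : Set (V × V × ℤ)) : V → List (V × V × ℤ) → V → Prop
  | nil (v : V) : IsPath E v [] v
  | cons {u v w : V} {d : ℤ} {p : List (V × V × ℤ)} :
      (u, v, d) ∈ E → IsPath E v p w → IsPath E u ((u, v, d) :: p) w

/-- The weight of a path: the sum of the weights of its edges. -/
def pweight {V : Type*} (p : List (V × V × ℤ)) : ℤ := (p.map fun e => e.2.2).sum

/-- The graph `E` has no negative weight cycle. -/
def NoNegCycle {V : Type*} (E : Set (V × V × ℤ)) : Prop :=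
  ∀ (v : V) (p : List (V × V × ℤ)), IsPath E v p v → 0 ≤ pweight p

/-- `wSP E u v` is the minimum weight of a path from `u` to `v` in `E`
(`⊤` if no path exists). -/
noncomputable def wSP {V : Type*} (E : Set (V × V × ℤ)) (u v : V) : WithTop ℤ :=
  sInf {w : WithTop ℤ | ∃ p, IsPath E u p v ∧ (pweight p : WithTop ℤ) = w}

/-- The bounds function `ρ(u) = ⌊wSP(u, -u) / 2⌋` (`⊤` if there is no path from `u` to `-u`). -/
noncomputable def rho (φ : Set (UC X)) (u : Vtx X) : WithTop ℤ :=
  (wSP (Gr φ) u (vneg u)).map fun w => Int.fdiv w 2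

/-!
An integral model `m` turns `x⁺ ↦ m x`, `x⁻ ↦ -m x` into a potential of `G_φ`, so a path from
`u` to `-u` weighs at least twice the value of `-u`, and `ρ(u) + ρ(-u) ≥ 0`.

Conversely, `G_φ` has finitely many non-loop edges and no negative cycle, so it has an integral
potential `δ`, and `s u = δ u - δ (-u)` is twice a rational solution. Rounding every `s u / 2`
down or up respects each edge `a → b` except when it is tight (`s b = s a + 2d`) between odd
values, where rounding `b` up forces rounding `a` up. These implications form a 2-SAT instance
symmetric under `u ↦ -u`; it is solvable because a chain of them from `u` to `-u` and back gives
paths of weights `-s u` and `s u` with `s u` odd, so `ρ(u) + ρ(-u) ≤ -1`.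
-/

open Relation

section Paths

variable {V : Type*} {E : Set (V × V × ℤ)}

@[simp] lemma pweight_nil : pweight ([] : List (V × V × ℤ)) = 0 := rfl

@[simp] lemma pweight_cons (e : V × V × ℤ) (p : List (V × V × ℤ)) :
    pweight (e :: p) = e.2.2 + pweight p := by
  simp [pweight]

@[simp] lemma pweight_append (p q : List (V × V × ℤ)) :
    pweight (p ++ q) = pweight p + pweight q := by
  simp [pweight]

lemma IsPath.singleton {e : V × V × ℤ} (he : e ∈ E) : IsPath E e.1 [e] e.2.1 :=
  .cons he (.nil _)

lemma IsPath.append {u v w : V} {p q : List (V × V × ℤ)}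
    (hp : IsPath E u p v) (hq : IsPath E v q w) : IsPath E u (p ++ q) w := by
  induction hp with
  | nil => exact hq
  | cons he _ ih => exact .cons he (ih hq)

lemma isPath_append_iff {u w : V} {p q : List (V × V × ℤ)} :
    IsPath E u (p ++ q) w ↔ ∃ v, IsPath E u p v ∧ IsPath E v q w := by
  refine ⟨fun h => ?_, fun ⟨v, hp, hq⟩ => hp.append hq⟩
  induction p generalizing u with
  | nil => exact ⟨u, .nil u, h⟩
  | cons e p ih =>
    cases h with
    | cons he ht =>
      obtain ⟨v, hp, hq⟩ := ih ht
      exact ⟨v, .cons he hp, hq⟩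

lemma isPath_cons_iff {u w : V} {e : V × V × ℤ} {p : List (V × V × ℤ)} :
    IsPath E u (e :: p) w ↔ u = e.1 ∧ e ∈ E ∧ IsPath E e.2.1 p w := by
  constructor
  · rintro (_ | ⟨he, hp⟩)
    exact ⟨rfl, he, hp⟩
  · rintro ⟨rfl, he, hp⟩
    exact .cons he hp

lemma IsPath.mem {u v : V} {p : List (V × V × ℤ)} (hp : IsPath E u p v) {e : V × V × ℤ}
    (he : e ∈ p) : e ∈ E := by
  induction hp with
  | nil => simp at he
  | cons hd _ ih =>
    rcases List.mem_cons.1 he with rfl | he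
    exacts [hd, ih he]

lemma IsPath.potential_le {f : V → ℤ} (hf : ∀ e ∈ E, f e.2.1 ≤ f e.1 + e.2.2)
    {u v : V} {p : List (V × V × ℤ)} (hp : IsPath E u p v) : f v ≤ f u + pweight p := by
  induction hp with
  | nil => simp
  | cons he _ ih =>
    have := hf _ he
    simp only [pweight_cons] at this ⊢
    omega

lemma IsPath.erase_loop (hnc : NoNegCycle E) {u v : V} {p q : List (V × V × ℤ)}
    {e : V × V × ℤ} (h : IsPath E u (p ++ e :: q) v) (he : e.1 = e.2.1) :
    IsPath E u (p ++ q) v ∧ pweight (p ++ q) ≤ pweight (p ++ e :: q) := by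
  obtain ⟨w, hp, hq⟩ := isPath_append_iff.1 h
  obtain ⟨rfl, heE, hq⟩ := isPath_cons_iff.1 hq
  have hloop : IsPath E e.1 [e] e.1 := he ▸ IsPath.singleton heE
  have := hnc _ _ hloop
  simp only [pweight_cons, pweight_nil, pweight_append] at this ⊢
  exact ⟨hp.append (he ▸ hq), by omega⟩

lemma IsPath.erase_cycle (hnc : NoNegCycle E) {u v : V} {p q r : List (V × V × ℤ)}
    {e : V × V × ℤ} (h : IsPath E u (p ++ e :: (q ++ e :: r)) v) :
    IsPath E u (p ++ e :: r) v ∧ pweight (p ++ e :: r) ≤ pweight (p ++ e :: (q ++ e :: r)) := by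
  obtain ⟨w, hp, h⟩ := isPath_append_iff.1 h
  obtain ⟨rfl, heE, h⟩ := isPath_cons_iff.1 h
  obtain ⟨w', hq, h⟩ := isPath_append_iff.1 h
  obtain ⟨rfl, -, hr⟩ := isPath_cons_iff.1 h
  have hcyc : IsPath E e.1 (e :: q) e.1 := .cons heE hq
  have := hnc _ _ hcyc
  simp only [pweight_cons, pweight_append] at this ⊢
  exact ⟨hp.append (.cons heE hr), by omega⟩

lemma exists_eq_append_cons_append_cons_of_not_nodup {α : Type*} {l : List α}
    (h : ¬ l.Nodup) : ∃ a l₁ l₂ l₃, l = l₁ ++ a :: (l₂ ++ a :: l₃) := by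
  obtain ⟨a, ha⟩ : ∃ a, [a, a].Sublist l := by simpa [List.nodup_iff_sublist] using h
  obtain ⟨r₁, r₂, rfl, h₁, h₂⟩ := List.cons_sublist_iff.1 ha
  obtain ⟨l₁, t, rfl⟩ := List.append_of_mem h₁
  obtain ⟨l₂, l₃, rfl⟩ := List.append_of_mem (List.singleton_sublist.1 h₂)
  exact ⟨a, l₁, t ++ l₂, l₃, by simp⟩

lemma IsPath.exists_nodup_le (hnc : NoNegCycle E) {u v : V} {p : List (V × V × ℤ)}
    (hp : IsPath E u p v) :
    ∃ q, IsPath E u q v ∧ q.Nodup ∧ (∀ e ∈ q, e.1 ≠ e.2.1) ∧ pweight q ≤ pweight p := by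
  induction hn : p.length using Nat.strong_induction_on generalizing p with
  | _ n ih =>
  by_cases hloop : ∃ e ∈ p, e.1 = e.2.1
  · obtain ⟨e, he, hl⟩ := hloop
    obtain ⟨p₁, p₂, rfl⟩ := List.append_of_mem he
    obtain ⟨hp', hw⟩ := hp.erase_loop hnc hl
    obtain ⟨q, hq, hnd, hnl, hw'⟩ := ih _ (by simp only [List.length_append, List.length_cons] at hn ⊢; omega) hp' rfl
    exact ⟨q, hq, hnd, hnl, hw'.trans hw⟩
  by_cases hnd : p.Nodup
  · exact ⟨p, hp, hnd, fun e he hl => hloop ⟨e, he, hl⟩, le_rfl⟩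
  obtain ⟨e, p₁, p₂, p₃, rfl⟩ := exists_eq_append_cons_append_cons_of_not_nodup hnd
  obtain ⟨hp', hw⟩ := hp.erase_cycle hnc
  obtain ⟨q, hq, hnd, hnl, hw'⟩ := ih _ (by simp only [List.length_append, List.length_cons] at hn ⊢; omega) hp' rfl
  exact ⟨q, hq, hnd, hnl, hw'.trans hw⟩

lemma exists_forall_le_pweight (hF : {e ∈ E | e.1 ≠ e.2.1}.Finite) (hnc : NoNegCycle E) :
    ∃ B, ∀ u v p, IsPath E u p v → B ≤ pweight p := by
  classical
  refine ⟨∑ e ∈ hF.toFinset, min e.2.2 0, fun u v p hp => ?_⟩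
  obtain ⟨q, hq, hnd, hnl, hw⟩ := hp.exists_nodup_le hnc
  have hsub : q.toFinset ⊆ hF.toFinset := fun e he => by
    rw [List.mem_toFinset] at he
    simpa using ⟨hq.mem he, hnl e he⟩
  calc ∑ e ∈ hF.toFinset, min e.2.2 0
      ≤ ∑ e ∈ q.toFinset, min e.2.2 0 :=
        Finset.sum_le_sum_of_subset_of_nonpos' hsub fun e _ _ => min_le_right _ _
    _ ≤ ∑ e ∈ q.toFinset, e.2.2 := Finset.sum_le_sum fun e _ => min_le_left _ _
    _ = pweight q := List.sum_toFinset _ hnd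
    _ ≤ pweight p := hw

/-- The least weight of a path ending at `v` is a potential. -/
theorem exists_potential (hF : {e ∈ E | e.1 ≠ e.2.1}.Finite) (hnc : NoNegCycle E) :
    ∃ δ : V → ℤ, ∀ e ∈ E, δ e.2.1 ≤ δ e.1 + e.2.2 := by
  obtain ⟨B, hB⟩ := exists_forall_le_pweight hF hnc
  have hleast (v : V) : ∃ w, (∃ u p, IsPath E u p v ∧ pweight p = w) ∧
      ∀ w', (∃ u p, IsPath E u p v ∧ pweight p = w') → w ≤ w' :=
    Int.exists_least_of_bdd ⟨B, by rintro _ ⟨u, p, hp, rfl⟩; exact hB u v p hp⟩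
      ⟨0, v, [], .nil v, rfl⟩
  choose δ hδ hδ_le using hleast
  refine ⟨δ, fun e he => ?_⟩
  obtain ⟨u, p, hp, hw⟩ := hδ e.1
  have := hδ_le e.2.1 _ ⟨u, p ++ [e], hp.append (.singleton he), rfl⟩
  simp only [pweight_append, pweight_cons, pweight_nil] at this
  omega

end Paths

section ShortestPath

variable {V : Type*} {E : Set (V × V × ℤ)} {u v : V}

lemma le_wSP {B : ℤ} (hB : ∀ p, IsPath E u p v → B ≤ pweight p) :
    (B : WithTop ℤ) ≤ wSP E u v := by
  rcases Set.eq_empty_or_nonempty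
      {w : WithTop ℤ | ∃ p, IsPath E u p v ∧ (pweight p : WithTop ℤ) = w} with h | h
  · simp [wSP, h]
  · refine le_csInf h ?_
    rintro _ ⟨p, hp, rfl⟩
    exact WithTop.coe_le_coe.2 (hB p hp)

lemma wSP_le {B : ℤ} (hB : ∀ q, IsPath E u q v → B ≤ pweight q) {p : List (V × V × ℤ)}
    (hp : IsPath E u p v) : wSP E u v ≤ pweight p :=
  csInf_le ⟨B, by rintro _ ⟨q, hq, rfl⟩; exact WithTop.coe_le_coe.2 (hB q hq)⟩ ⟨p, hp, rfl⟩

lemma wSP_le_of_isPath (hnc : NoNegCycle E) {p q : List (V × V × ℤ)} (hp : IsPath E u p v)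
    (hq : IsPath E v q u) : wSP E u v ≤ pweight p :=
  wSP_le (B := -pweight q) (fun p' hp' => by
    have := hnc _ _ (hp'.append hq)
    rw [pweight_append] at this
    omega) hp

end ShortestPath

section TwoSat

variable {W : Type*} {neg : W → W} {I : W → W → Prop}

lemma reflTransGen_neg_swap (hskew : ∀ a b, I a b → I (neg b) (neg a)) {a b : W}
    (h : ReflTransGen I a b) : ReflTransGen I (neg b) (neg a) := by
  induction h with
  | refl => exact .refl
  | tail _ hbc ih => exact .head (hskew _ _ hbc) ih

lemma consistent_union_reach (hneg : Function.Involutive neg)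
    (hskew : ∀ a b, I a b → I (neg b) (neg a)) {P : Set W}
    (hP : ∀ w ∈ P, neg w ∉ P) (hPI : ∀ a ∈ P, ∀ b, ReflTransGen I a b → b ∈ P) {u : W}
    (hu : neg u ∉ P) (hun : ¬ ReflTransGen I u (neg u)) :
    ∀ w ∈ P ∪ {w | ReflTransGen I u w}, neg w ∉ P ∪ {w | ReflTransGen I u w} := by
  have skew {a b} (h : ReflTransGen I a (neg b)) : ReflTransGen I b (neg a) := by
    simpa [hneg b] using reflTransGen_neg_swap hskew h
  rintro w (hw | hw) (hnw | hnw)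
  · exact hP w hw hnw
  · exact hu (hPI w hw _ (skew hnw))
  · exact hu (hPI _ hnw _ (reflTransGen_neg_swap hskew hw))
  · exact hun (hw.trans (skew hnw))

theorem exists_twoSat_solution (hneg : Function.Involutive neg)
    (hskew : ∀ a b, I a b → I (neg b) (neg a))
    (hcons : ∀ u, ReflTransGen I u (neg u) → ¬ ReflTransGen I (neg u) u) :
    ∃ P : Set W, (∀ u, u ∈ P ↔ neg u ∉ P) ∧ ∀ a b, I a b → a ∈ P → b ∈ P := by
  let S : Set (Set W) := {P | (∀ w ∈ P, neg w ∉ P) ∧ ∀ a ∈ P, ∀ b, I a b → b ∈ P}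
  obtain ⟨M, ⟨hMcons, hMI⟩, hMmax⟩ := zorn_subset S fun c hcS hc => by
    refine ⟨⋃₀ c, ⟨?_, ?_⟩, fun s hs => Set.subset_sUnion_of_mem hs⟩
    · rintro w ⟨s, hs, hws⟩ ⟨t, ht, hwt⟩
      rcases hc.total hs ht with hst | hts
      · exact (hcS ht).1 w (hst hws) hwt
      · exact (hcS hs).1 w hws (hts hwt)
    · rintro a ⟨s, hs, has⟩ b hab
      exact ⟨s, hs, (hcS hs).2 a has b hab⟩
  have hMreach : ∀ a ∈ M, ∀ b, ReflTransGen I a b → b ∈ M := fun a ha b hab => by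
    induction hab with
    | refl => exact ha
    | tail _ hbc ih => exact hMI _ ih _ hbc
  have hmem {u} (hu : neg u ∉ M) (hun : ¬ ReflTransGen I u (neg u)) : u ∈ M := by
    have hS : M ∪ {w | ReflTransGen I u w} ∈ S :=
      ⟨consistent_union_reach hneg hskew hMcons hMreach hu hun, by
        rintro a (ha | ha) b hab
        exacts [Or.inl (hMI a ha b hab), Or.inr (ha.tail hab)]⟩
    exact hMmax hS Set.subset_union_left (Or.inr .refl)
  refine ⟨M, fun u => ⟨hMcons u, fun hnu => ?_⟩, fun a b hab ha => hMI a ha b hab⟩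
  by_contra hu
  by_cases hun : ReflTransGen I u (neg u)
  · exact hnu (hmem (by rwa [hneg u]) (by rw [hneg u]; exact hcons u hun))
  · exact hu (hmem hnu hun)

end TwoSat

section ConstraintGraph

variable {X : Type*}

@[simp] lemma vneg_vneg (u : Vtx X) : vneg (vneg u) = u := by
  simp [vneg]

lemma vneg_involutive : Function.Involutive (vneg : Vtx X → Vtx X) := vneg_vneg

lemma vneg_ne (u : Vtx X) : vneg u ≠ u := by
  simp [vneg, Prod.ext_iff]

lemma mirror_mem_cedges {c : UC X} {a b : Vtx X} {d : ℤ} (he : (a, b, d) ∈ cedges c) :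
    (vneg b, vneg a, d) ∈ cedges c := by
  obtain ⟨x, y, d', h⟩ := he
  refine ⟨x, y, d', ?_⟩
  rcases h with ⟨hc, he | he⟩ | ⟨hc, he | he⟩ | ⟨hc, he | he⟩ | ⟨hc, he⟩ | ⟨hc, he⟩ <;>
    simp only [Prod.mk.injEq] at he <;> obtain ⟨rfl, rfl, rfl⟩ := he <;> simp [vneg, hc]

lemma mirror_mem_Gr {φ : Set (UC X)} {a b : Vtx X} {d : ℤ} (he : (a, b, d) ∈ Gr φ) :
    (vneg b, vneg a, d) ∈ Gr φ := by
  obtain ⟨c, hc, he⟩ := he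
  exact ⟨c, hc, mirror_mem_cedges he⟩

lemma mem_support_of_mem_cedges {c : UC X} {e : Vtx X × Vtx X × ℤ} (he : e ∈ cedges c)
    (hne : e.1 ≠ e.2.1) : e.1.2 ∈ c.f.support ∧ e.2.1.2 ∈ c.f.support := by
  obtain ⟨x, y, d, h⟩ := he
  rcases h with ⟨rfl, rfl | rfl⟩ | ⟨rfl, rfl | rfl⟩ | ⟨rfl, rfl | rfl⟩ | ⟨rfl, rfl⟩ | ⟨rfl, rfl⟩ <;>
    by_cases hxy : x = y <;> simp_all [eq_comm]

lemma finite_nonloop_Gr {φ : Set (UC X)} (hfin : φ.Finite) :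
    {e ∈ Gr φ | e.1 ≠ e.2.1}.Finite := by
  refine (hfin.biUnion fun c _ => ((Set.finite_univ.prod c.f.support.finite_toSet).prod
    ((Set.finite_univ.prod c.f.support.finite_toSet).prod
      (Set.toFinite {c.bound, 2 * c.bound})))).subset ?_
  rintro e ⟨⟨c, hc, he⟩, hne⟩
  obtain ⟨h₁, h₂⟩ := mem_support_of_mem_cedges he hne
  refine Set.mem_biUnion hc ⟨⟨trivial, h₁⟩, ⟨trivial, h₂⟩, ?_⟩
  obtain ⟨x, y, d, h⟩ := he
  rcases h with ⟨rfl, rfl | rfl⟩ | ⟨rfl, rfl | rfl⟩ | ⟨rfl, rfl | rfl⟩ | ⟨rfl, rfl⟩ | ⟨rfl, rfl⟩ <;>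
    simp

lemma edge_le_iff_holds {c : UC X} {val : Vtx X → ℤ} (hval : ∀ u, val (vneg u) = -val u)
    {e : Vtx X × Vtx X × ℤ} (he : e ∈ cedges c) :
    val e.2.1 ≤ val e.1 + e.2.2 ↔ c.holds fun x => val (true, x) := by
  have hf (x : X) : val (false, x) = -val (true, x) := hval (true, x)
  obtain ⟨x, y, d, h⟩ := he
  rcases h with ⟨rfl, rfl | rfl⟩ | ⟨rfl, rfl | rfl⟩ | ⟨rfl, rfl | rfl⟩ | ⟨rfl, rfl⟩ | ⟨rfl, rfl⟩ <;>
    simp [UC.holds, Finsupp.sum_add_index', Finsupp.sum_sub_index, Finsupp.sum_neg_index,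
      add_mul, sub_mul, hf] <;> omega

lemma cedges_nonempty {c : UC X} (hc : c.IsUTVPI) : (cedges c).Nonempty := by
  obtain ⟨f, d⟩ := c
  obtain ⟨a, b, x, y, ha, hb, rfl : f = _⟩ := hc
  rcases ha with rfl | rfl | rfl <;> rcases hb with rfl | rfl | rfl
  · exact ⟨_, x, y, d, .inr <| .inr <| .inl ⟨by simp [sub_eq_add_neg], .inl rfl⟩⟩
  · exact ⟨_, x, x, d, .inr <| .inr <| .inr <| .inr ⟨by simp, rfl⟩⟩
  · exact ⟨_, y, x, d, .inl ⟨by simp [sub_eq_add_neg, add_comm], .inl rfl⟩⟩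
  · exact ⟨_, y, y, d, .inr <| .inr <| .inr <| .inr ⟨by simp, rfl⟩⟩
  · exact ⟨_, x, x, d, .inl ⟨by simp, .inl rfl⟩⟩
  · exact ⟨_, y, y, d, .inr <| .inr <| .inr <| .inl ⟨by simp, rfl⟩⟩
  · exact ⟨_, x, y, d, .inl ⟨by simp [sub_eq_add_neg], .inl rfl⟩⟩
  · exact ⟨_, x, x, d, .inr <| .inr <| .inr <| .inl ⟨by simp, rfl⟩⟩
  · exact ⟨_, x, y, d, .inr <| .inl ⟨rfl, .inl rfl⟩⟩

end ConstraintGraph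

section Rho

variable {X : Type*} {φ : Set (UC X)} {u : Vtx X}

lemma le_rho {r : ℤ} (h : ∀ p, IsPath (Gr φ) u p (vneg u) → 2 * r ≤ pweight p) :
    (r : WithTop ℤ) ≤ rho φ u := by
  have hw := le_wSP h
  unfold rho
  cases hwSP : wSP (Gr φ) u (vneg u) with
  | top => exact le_top
  | coe w =>
    rw [hwSP, WithTop.coe_le_coe] at hw
    rw [WithTop.map_coe, WithTop.coe_le_coe, Int.fdiv_eq_ediv_of_nonneg _ zero_le_two]
    omega

lemma rho_le {w : ℤ} (h : wSP (Gr φ) u (vneg u) ≤ w) : rho φ u ≤ (Int.fdiv w 2 : ℤ) := by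
  unfold rho
  cases hwSP : wSP (Gr φ) u (vneg u) with
  | top => simp [hwSP] at h
  | coe w' =>
    rw [hwSP, WithTop.coe_le_coe] at h
    rw [WithTop.map_coe, WithTop.coe_le_coe, Int.fdiv_eq_ediv_of_nonneg _ zero_le_two,
      Int.fdiv_eq_ediv_of_nonneg _ zero_le_two]
    omega

end Rho

section Soundness

variable {X : Type*} {φ : Set (UC X)}

def signedVal (m : X → ℤ) (u : Vtx X) : ℤ := cond u.1 (m u.2) (-m u.2)

lemma signedVal_vneg (m : X → ℤ) (u : Vtx X) : signedVal m (vneg u) = -signedVal m u := by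
  obtain ⟨_ | _, x⟩ := u <;> simp [signedVal, vneg]

lemma Sat.signedVal_edge_le {m : X → ℤ} (hm : Sat m φ) {e : Vtx X × Vtx X × ℤ} (he : e ∈ Gr φ) :
    signedVal m e.2.1 ≤ signedVal m e.1 + e.2.2 := by
  obtain ⟨c, hc, he⟩ := he
  exact (edge_le_iff_holds (signedVal_vneg m) he).2 (hm c hc)

theorem Sat.rho_add_rho_nonneg {m : X → ℤ} (hm : Sat m φ) (u : Vtx X) :
    0 ≤ rho φ u + rho φ (vneg u) := by
  have hle (u : Vtx X) : ((-signedVal m u : ℤ) : WithTop ℤ) ≤ rho φ u := le_rho fun p hp => by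
    have := hp.potential_le fun e he => hm.signedVal_edge_le he
    rw [signedVal_vneg] at this
    omega
  calc (0 : WithTop ℤ)
      = ((-signedVal m u : ℤ) : WithTop ℤ) + ((-signedVal m (vneg u) : ℤ) : WithTop ℤ) := by
        rw [signedVal_vneg, neg_neg, ← WithTop.coe_add, neg_add_cancel, WithTop.coe_zero]
    _ ≤ rho φ u + rho φ (vneg u) := add_le_add (hle u) (hle (vneg u))

end Soundness

section Rounding

variable {X : Type*} {E : Set (Vtx X × Vtx X × ℤ)} {s : Vtx X → ℤ}

def TightOddEdge (E : Set (Vtx X × Vtx X × ℤ)) (s : Vtx X → ℤ) (a b : Vtx X) : Prop :=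
  Odd (s a) ∧ ∃ d, (a, b, d) ∈ E ∧ s b = s a + 2 * d

lemma TightOddEdge.mirror (hE : ∀ a b d, (a, b, d) ∈ E → (vneg b, vneg a, d) ∈ E)
    (hs : ∀ u, s (vneg u) = -s u) {a b : Vtx X} (h : TightOddEdge E s a b) :
    TightOddEdge E s (vneg b) (vneg a) := by
  obtain ⟨hodd, d, he, htight⟩ := h
  refine ⟨?_, d, hE a b d he, ?_⟩
  · rw [hs, htight, odd_neg]
    exact hodd.add_even (even_two_mul d)
  · rw [hs, hs, htight]
    ring

lemma exists_isPath_of_reflTransGen {a b : Vtx X} (h : ReflTransGen (TightOddEdge E s) a b) :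
    ∃ p, IsPath E a p b ∧ 2 * pweight p = s b - s a := by
  induction h with
  | refl => exact ⟨[], .nil a, by simp⟩
  | @tail b c _ hbc ih =>
    obtain ⟨p, hp, hw⟩ := ih
    obtain ⟨-, d, he, htight⟩ := hbc
    refine ⟨p ++ [(b, c, d)], hp.append (.singleton he), ?_⟩
    simp only [pweight_append, pweight_cons, pweight_nil]
    omega

lemma odd_of_reflTransGen {a b : Vtx X} (h : ReflTransGen (TightOddEdge E s) a b) (hne : a ≠ b) :
    Odd (s a) := by
  rcases h.cases_head with rfl | ⟨c, hc, -⟩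
  exacts [absurd rfl hne, hc.1]

lemma not_reflTransGen_tightOddEdge {φ : Set (UC X)} (hnnc : NoNegCycle (Gr φ))
    (H : ∀ v, 0 ≤ rho φ v + rho φ (vneg v)) (hs : ∀ u, s (vneg u) = -s u) {u : Vtx X}
    (h₁ : ReflTransGen (TightOddEdge (Gr φ) s) u (vneg u))
    (h₂ : ReflTransGen (TightOddEdge (Gr φ) s) (vneg u) u) : False := by
  obtain ⟨p, hp, hpw⟩ := exists_isPath_of_reflTransGen h₁
  obtain ⟨q, hq, hqw⟩ := exists_isPath_of_reflTransGen h₂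
  have hodd := odd_of_reflTransGen h₁ (vneg_ne u).symm
  have hq' : IsPath (Gr φ) (vneg u) q (vneg (vneg u)) := by rwa [vneg_vneg]
  have hp' : IsPath (Gr φ) (vneg (vneg u)) p (vneg u) := by rwa [vneg_vneg]
  have hsum := (H u).trans
    (add_le_add (rho_le (wSP_le_of_isPath hnnc hp hq)) (rho_le (wSP_le_of_isPath hnnc hq' hp')))
  rw [← WithTop.coe_add, ← WithTop.coe_zero, WithTop.coe_le_coe,
    Int.fdiv_eq_ediv_of_nonneg _ zero_le_two, Int.fdiv_eq_ediv_of_nonneg _ zero_le_two] at hsum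
  rw [hs, Int.odd_iff] at *
  omega

noncomputable def roundVal (s : Vtx X → ℤ) (P : Set (Vtx X)) (u : Vtx X) : ℤ :=
  (s u + P.indicator 1 u) / 2

lemma roundVal_vneg (hs : ∀ u, s (vneg u) = -s u) {P : Set (Vtx X)}
    (hP : ∀ u, u ∈ P ↔ vneg u ∉ P) (u : Vtx X) : roundVal s P (vneg u) = -roundVal s P u := by
  by_cases hu : u ∈ P
  · have hnu : vneg u ∉ P := (hP u).1 hu
    simp only [roundVal, hs, Set.indicator_of_mem hu, Set.indicator_of_notMem hnu, Pi.one_apply]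
    omega
  · have hnu : vneg u ∈ P := by by_contra h; exact hu ((hP u).2 h)
    simp only [roundVal, hs, Set.indicator_of_mem hnu, Set.indicator_of_notMem hu, Pi.one_apply]
    omega

lemma roundVal_le {P : Set (Vtx X)} {a b : Vtx X} {d : ℤ} (hle : s b ≤ s a + 2 * d)
    (hP : s b = s a + 2 * d → Odd (s a) → b ∈ P → a ∈ P) :
    roundVal s P b ≤ roundVal s P a + d := by
  by_cases ha : a ∈ P
  · by_cases hb : b ∈ P <;>
      simp only [roundVal, Set.indicator_of_mem, Set.indicator_of_notMem, ha, hb,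
        not_false_eq_true, Pi.one_apply] <;> omega
  · by_cases hb : b ∈ P
    · have hloose : ¬ (s b = s a + 2 * d ∧ s a % 2 = 1) := fun ⟨h₁, h₂⟩ =>
        ha (hP h₁ (Int.odd_iff.2 h₂) hb)
      simp only [roundVal, Set.indicator_of_mem hb, Set.indicator_of_notMem ha, Pi.one_apply]
      omega
    · simp only [roundVal, Set.indicator_of_notMem ha, Set.indicator_of_notMem hb]
      omega

end Rounding

section Completeness

variable {X : Type*} {φ : Set (UC X)}

lemma exists_doubled_solution (hfin : φ.Finite) (hnnc : NoNegCycle (Gr φ)) :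
    ∃ s : Vtx X → ℤ, (∀ u, s (vneg u) = -s u) ∧ ∀ a b d, (a, b, d) ∈ Gr φ → s b ≤ s a + 2 * d := by
  obtain ⟨δ, hδ⟩ := exists_potential (finite_nonloop_Gr hfin) hnnc
  refine ⟨fun u => δ u - δ (vneg u), fun u => by simp, fun a b d he => ?_⟩
  have h₁ := hδ _ he
  have h₂ := hδ _ (mirror_mem_Gr he)
  simp only at h₁ h₂ ⊢
  omega

theorem satZ_of_rho_add_rho_nonneg (hwf : ∀ c ∈ φ, c.IsUTVPI) (hfin : φ.Finite)
    (hnnc : NoNegCycle (Gr φ)) (H : ∀ v, 0 ≤ rho φ v + rho φ (vneg v)) : SatZ φ := by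
  obtain ⟨s, hs, hsE⟩ := exists_doubled_solution hfin hnnc
  obtain ⟨P, hP, hPI⟩ := exists_twoSat_solution (I := Function.swap (TightOddEdge (Gr φ) s))
    vneg_involutive (fun _ _ h => h.mirror (fun _ _ _ => mirror_mem_Gr) hs)
    fun u h₁ h₂ => not_reflTransGen_tightOddEdge hnnc H hs (reflTransGen_swap.1 h₂)
      (reflTransGen_swap.1 h₁)
  refine ⟨fun x => roundVal s P (true, x), fun c hc => ?_⟩
  obtain ⟨⟨a, b, d⟩, he⟩ := cedges_nonempty (hwf c hc)
  refine (edge_le_iff_holds (roundVal_vneg hs hP) he).1 ?_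
  exact roundVal_le (hsE a b d ⟨c, hc, he⟩) fun htight hodd hb =>
    hPI b a ⟨hodd, d, ⟨c, hc, he⟩, htight⟩ hb

end Completeness

/-- If the constraint graph `G_φ` of a (finite) set `φ` of UTVPI
constraints has no negative weight cycle, then `φ` is unsatisfiable in ℤ iff there
is a vertex `v` with `ρ(v) + ρ(-v) < 0` (in `ℤ ∪ {+∞}`). -/
theorem unsatZ_iff_exists_rho_neg {X : Type*}
    (φ : Set (UC X)) (hwf : ∀ c ∈ φ, c.IsUTVPI) (hfin : φ.Finite)
    (hnnc : NoNegCycle (Gr φ)) :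
    ¬ SatZ φ ↔ ∃ v : Vtx X, rho φ v + rho φ (vneg v) < (0 : WithTop ℤ) := by
  constructor
  · intro hunsat
    by_contra! H
    exact hunsat (satZ_of_rho_add_rho_nonneg hwf hfin hnnc H)
  · rintro ⟨v, hv⟩ ⟨m, hm⟩
    exact (hm.rho_add_rho_nonneg v).not_gt hv

end UTVPIPaper
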